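/- arXiv:1411.5297 — 3 statements merged into one kernel-verified Lean document; each statement's English description precedes it below -/
import Mathlib

section
/- For any real numbers s₁, s₂ and unit vectors n, m ∈ ℝ³ with |n| = |m| = 1, the squared Frobenius norm satisfies |s₁(n⊗n − (1/3)I) − s₂(m⊗m − (1/3)I)|² ≥ (1/6)|s₁ − s₂|². -/
open Matrix

/-- Squared Frobenius norm of a 3×3 real matrix. -/
noncomputable def frobSq (A : Matrix (Fin 3) (Fin 3) ℝ) : ℝ := ∑ i, ∑ j, (A i j)^2

/-!
The tensors `Qₙ = n ⊗ n - I/3` are symmetric, so `|s₁ Qₙ - s₂ Qₘ|²` is a trace that expands to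
`(2/3) s₁² + (2/3) s₂² - 2 s₁ s₂ (c - 1/3)` with `c = (n · m)²`, using `tr (Qₙ Qₘ) = c - 1/3`.
By Cauchy–Schwarz `c ∈ [0, 1]`, and the expression is affine in `c`, so it suffices to check the
endpoints: at `c = 1` it equals `(2/3)(s₁ - s₂)²`, at `c = 0` it equals
`(1/6)(s₁ - s₂)² + (1/2)(s₁ + s₂)²`.
-/

lemma frobSq_eq_trace_transpose_mul (A : Matrix (Fin 3) (Fin 3) ℝ) :
    frobSq A = trace (Aᵀ * A) := by
  simp only [frobSq, trace, diag, mul_apply, transpose_apply, sq]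
  exact Finset.sum_comm

lemma trace_vecMulVec_self_mul_vecMulVec_self {ι R : Type*} [Fintype ι] [CommSemiring R]
    (u v : ι → R) : trace (vecMulVec u u * vecMulVec v v) = (u ⬝ᵥ v) ^ 2 := by
  rw [vecMulVec_mul_vecMulVec, trace_vecMulVec, dotProduct_smul, smul_eq_mul, sq]

noncomputable def uniaxialTensor (n : Fin 3 → ℝ) : Matrix (Fin 3) (Fin 3) ℝ :=
  vecMulVec n n - (1/3 : ℝ) • (1 : Matrix (Fin 3) (Fin 3) ℝ)

namespace uniaxialTensor

variable {n m : Fin 3 → ℝ}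

lemma isSymm (n : Fin 3 → ℝ) : (uniaxialTensor n).IsSymm := by
  simp [uniaxialTensor, IsSymm, transpose_vecMulVec]

lemma trace_mul (hn : n ⬝ᵥ n = 1) (hm : m ⬝ᵥ m = 1) :
    trace (uniaxialTensor n * uniaxialTensor m) = (n ⬝ᵥ m) ^ 2 - 1 / 3 := by
  simp only [uniaxialTensor, sub_mul, mul_sub, Matrix.mul_smul, Matrix.smul_mul, Matrix.mul_one,
    Matrix.one_mul, trace_sub, trace_smul, trace_vecMulVec_self_mul_vecMulVec_self,
    trace_vecMulVec, hn, hm, trace_one, Fintype.card_fin, smul_eq_mul]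
  norm_num

lemma frobSq_smul_sub_smul (s₁ s₂ : ℝ) (hn : n ⬝ᵥ n = 1) (hm : m ⬝ᵥ m = 1) :
    frobSq (s₁ • uniaxialTensor n - s₂ • uniaxialTensor m) =
      2/3 * s₁ ^ 2 + 2/3 * s₂ ^ 2 - 2 * s₁ * s₂ * ((n ⬝ᵥ m) ^ 2 - 1/3) := by
  rw [frobSq_eq_trace_transpose_mul, transpose_sub, transpose_smul, transpose_smul, (isSymm n).eq,
    (isSymm m).eq]
  simp only [sub_mul, mul_sub, Matrix.mul_smul, Matrix.smul_mul, trace_sub, trace_smul,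
    smul_eq_mul, trace_mul hn hm, trace_mul hn hn, trace_mul hm hm, trace_mul hm hn,
    dotProduct_comm m n, hn, hm]
  ring

end uniaxialTensor

lemma sq_sub_div_six_le (a b c : ℝ) (hc₀ : 0 ≤ c) (hc₁ : c ≤ 1) :
    (a - b) ^ 2 / 6 ≤ 2/3 * a ^ 2 + 2/3 * b ^ 2 - 2 * a * b * (c - 1/3) := by
  rcases le_total 0 (a * b) with hab | hab
  · nlinarith [sq_nonneg (a - b), mul_nonneg hab (sub_nonneg.mpr hc₁)]
  · nlinarith [sq_nonneg (a + b), mul_nonpos_of_nonpos_of_nonneg hab hc₀]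

theorem uniaxial_Q_distance_lower_bound
    (s₁ s₂ : ℝ) (n m : Fin 3 → ℝ)
    (hn : ∑ i, (n i)^2 = 1) (hm : ∑ i, (m i)^2 = 1) :
    frobSq (s₁ • (vecMulVec n n - (1/3 : ℝ) • (1 : Matrix (Fin 3) (Fin 3) ℝ))
          - s₂ • (vecMulVec m m - (1/3 : ℝ) • (1 : Matrix (Fin 3) (Fin 3) ℝ)))
      ≥ (1/6) * |s₁ - s₂|^2 := by
  have hn' : n ⬝ᵥ n = 1 := by simpa only [dotProduct, sq] using hn
  have hm' : m ⬝ᵥ m = 1 := by simpa only [dotProduct, sq] using hm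
  have cauchy_schwarz : (n ⬝ᵥ m) ^ 2 ≤ 1 :=
    (Finset.sum_mul_sq_le_sq_mul_sq Finset.univ n m).trans_eq (by rw [hn, hm, one_mul])
  change frobSq (s₁ • uniaxialTensor n - s₂ • uniaxialTensor m) ≥ _
  rw [uniaxialTensor.frobSq_smul_sub_smul s₁ s₂ hn' hm', sq_abs, ge_iff_le, one_div_mul_eq_div]
  exact sq_sub_div_six_le s₁ s₂ _ (sq_nonneg _) cauchy_schwarz
end

section
/- Let m : Ω → S² be a unit vector field on an interval Ω ⊂ ℝ such that m⊗m is differentiable at a point x with m continuous at x. Then m is differentiable at x and m'ᵢ(x) = Σⱼ (mᵢmⱼ)'(x) mⱼ(x). -/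
/-!
For unit vectors `u`, `v` one has `uᵢ = ∑ⱼ uᵢuⱼvⱼ + uᵢ‖u - v‖² / 2`. Taking `u = m y`,
`v = m x`, the first term is a linear combination of the entries of `m ⊗ m`, with derivative
`∑ⱼ (mᵢmⱼ)'(x) mⱼ(x)`; the second is `O(‖y - x‖²)` because, as long as `⟨u, v⟩ ≥ 0` (which
continuity of `m` guarantees near `x`), `‖u - v‖ ≤ ‖u ⊗ u - v ⊗ v‖`, and `m ⊗ m` is
differentiable at `x`.
-/

open Filter Asymptotics Topology

section UnitVectors

variable {ι : Type*} [Fintype ι] {u v : ι → ℝ}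

lemma sum_sq_sub_eq (u v : ι → ℝ) :
    ∑ j, (u j - v j) ^ 2 = ∑ j, u j ^ 2 + ∑ j, v j ^ 2 - 2 * ∑ j, u j * v j := by
  simp only [sub_sq, Finset.sum_add_distrib, Finset.sum_sub_distrib, Finset.mul_sum]
  ring_nf

lemma sum_sum_sq_mul_sub_mul (u v : ι → ℝ) :
    ∑ j, ∑ k, (u j * u k - v j * v k) ^ 2
      = (∑ j, u j ^ 2) ^ 2 + (∑ j, v j ^ 2) ^ 2 - 2 * (∑ j, u j * v j) ^ 2 := by
  simp only [sq, Finset.sum_mul_sum]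
  simp only [← Finset.sum_add_distrib, ← Finset.sum_sub_distrib, Finset.mul_sum]
  refine Finset.sum_congr rfl fun j _ => Finset.sum_congr rfl fun k _ => ?_
  ring

/-- With `c = ⟨u, v⟩`, the two sides are `2 - 2c` and `2 - 2c² = (2 - 2c)(1 + c)`. -/
lemma sum_sq_sub_le_sum_sum_sq_mul_sub_mul (hu : ∑ j, u j ^ 2 = 1) (hv : ∑ j, v j ^ 2 = 1)
    (huv : 0 ≤ ∑ j, u j * v j) :
    ∑ j, (u j - v j) ^ 2 ≤ ∑ j, ∑ k, (u j * u k - v j * v k) ^ 2 := by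
  have hdist := sum_sq_sub_eq u v
  rw [hu, hv] at hdist
  rw [sum_sum_sq_mul_sub_mul, hu, hv]
  nlinarith [Finset.sum_nonneg fun j (_ : j ∈ Finset.univ) => sq_nonneg (u j - v j)]

lemma eq_sum_mul_mul_add (hu : ∑ j, u j ^ 2 = 1) (hv : ∑ j, v j ^ 2 = 1) (i : ι) :
    u i = ∑ j, u i * u j * v j + u i * (∑ j, (u j - v j) ^ 2) / 2 := by
  simp only [sum_sq_sub_eq, hu, hv, mul_assoc, ← Finset.mul_sum]
  ring

end UnitVectors

section LineField

variable {ι : Type*} [Fintype ι] {m : ℝ → ι → ℝ} {x : ℝ}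

lemma isBigO_sum_sum_sq_mul_sub_mul
    (hd : ∀ j k, DifferentiableAt ℝ (fun y => m y j * m y k) x) :
    (fun y => ∑ j, ∑ k, (m y j * m y k - m x j * m x k) ^ 2)
      =O[𝓝 x] fun y => ‖y - x‖ ^ 2 :=
  IsBigO.fun_sum fun j _ => IsBigO.fun_sum fun k _ => (hd j k).isBigO_sub.norm_right.pow 2

lemma isBigO_sum_sq_sub (hunit : ∀ᶠ y in 𝓝 x, ∑ j, m y j ^ 2 = 1)
    (hcont : ∀ j, ContinuousAt (fun y => m y j) x)
    (hd : ∀ j k, DifferentiableAt ℝ (fun y => m y j * m y k) x) :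
    (fun y => ∑ j, (m y j - m x j) ^ 2) =O[𝓝 x] fun y => ‖y - x‖ ^ 2 := by
  have hx : ∑ j, m x j ^ 2 = 1 := hunit.self_of_nhds
  have hinner : ∀ᶠ y in 𝓝 x, 0 < ∑ j, m y j * m x j := by
    have : Tendsto (fun y => ∑ j, m y j * m x j) (𝓝 x) (𝓝 1) := by
      simpa only [← sq, hx] using
        tendsto_finsetSum Finset.univ fun j _ => (hcont j).tendsto.mul_const (m x j)
    exact this.eventually (lt_mem_nhds one_pos)
  refine IsBigO.trans (IsBigO.of_norm_eventuallyLE ?_) (isBigO_sum_sum_sq_mul_sub_mul hd)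
  filter_upwards [hunit, hinner] with y hy hpos
  rw [Real.norm_of_nonneg (Finset.sum_nonneg fun j _ => sq_nonneg _)]
  exact sum_sq_sub_le_sum_sum_sq_mul_sub_mul hy hx hpos.le

lemma hasDerivAt_mul_sum_sq_sub_div_two (hunit : ∀ᶠ y in 𝓝 x, ∑ j, m y j ^ 2 = 1)
    (hcont : ∀ j, ContinuousAt (fun y => m y j) x)
    (hd : ∀ j k, DifferentiableAt ℝ (fun y => m y j * m y k) x) (i : ι) :
    HasDerivAt (fun y => m y i * (∑ j, (m y j - m x j) ^ 2) / 2) 0 x := by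
  have hO : (fun y => m y i * (∑ j, (m y j - m x j) ^ 2) / 2)
      =O[𝓝 x] fun y => ‖y - x‖ ^ 2 := by
    have hbdd := (hcont i).tendsto.isBigO_one ℝ
    simpa [div_eq_inv_mul] using (hbdd.mul (isBigO_sum_sq_sub hunit hcont hd)).const_mul_left 2⁻¹
  simpa using (hO.hasFDerivAt (𝕜 := ℝ) one_lt_two).hasDerivAt

theorem hasDerivAt_apply_of_hasDerivAt_mul_apply {d : ι → ι → ℝ}
    (hunit : ∀ᶠ y in 𝓝 x, ∑ j, m y j ^ 2 = 1)
    (hcont : ∀ j, ContinuousAt (fun y => m y j) x)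
    (hd : ∀ j k, HasDerivAt (fun y => m y j * m y k) (d j k) x) (i : ι) :
    HasDerivAt (fun y => m y i) (∑ j, d i j * m x j) x := by
  have hmain : HasDerivAt (fun y => ∑ j, m y i * m y j * m x j) (∑ j, d i j * m x j) x :=
    HasDerivAt.fun_sum fun j _ => (hd i j).mul_const (m x j)
  have hrem :=
    hasDerivAt_mul_sum_sq_sub_div_two hunit hcont (fun j k => (hd j k).differentiableAt) i
  refine (add_zero (∑ j, d i j * m x j) ▸ hmain.fun_add hrem).congr_of_eventuallyEq ?_
  filter_upwards [hunit] with y hy using eq_sum_mul_mul_add hy hunit.self_of_nhds i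

end LineField

/-- If the line field `m ⊗ m` of a unit vector field `m` on an interval is
differentiable at `x` and `m` is continuous at `x`, then `m` is differentiable at
`x` with `mᵢ'(x) = ∑ⱼ (mᵢmⱼ)'(x) mⱼ(x)`. -/
theorem deriv_of_vector_field_from_line_field
    (a b : ℝ) (Ω : Set ℝ) (hΩ : Ω = Set.Ioo a b)
    (m : ℝ → Fin 3 → ℝ) (x : ℝ) (hx : x ∈ Ω)
    (hunit : ∀ y ∈ Ω, ∑ j, (m y j)^2 = 1)
    (d : Fin 3 → Fin 3 → ℝ)
    (hd : ∀ i j, HasDerivAt (fun y => m y i * m y j) (d i j) x)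
    (hcont : ∀ i, ContinuousAt (fun y => m y i) x) :
    ∀ i, HasDerivAt (fun y => m y i) (∑ j, d i j * m x j) x := by
  have hΩx : Ω ∈ 𝓝 x := by
    subst hΩ
    exact isOpen_Ioo.mem_nhds hx
  exact hasDerivAt_apply_of_hasDerivAt_mul_apply (eventually_of_mem hΩx hunit) hcont hd
end

section
/- Let n* : [0,1] → S² be the cholesteric one-dimensional minimiser given in Euler angles by n*(z) = (cos θ(z) cos(tz), cos θ(z) sin(tz), sin θ(z)), where θ solves θ'(z)² = D − t² cos²θ(z) with θ(0) = 0, θ(1) = π/2 and D > t². Then the Lagrange multiplier λ(z) := |n*'(z)|² + 2t n*·(∇×n*) satisfies λ = −t² + θ'(0)² + 2t² sin²θ(z), and in particular |λ(z)| ≤ θ'(0)² + t² for all z. -/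
/-!
Writing the director in Euler angles, `|n'|² = θ'² + φ'² cos²θ` and the twist
`n₁ n₀' − n₀ n₁' = −φ' cos²θ`, so for `φ = t z` the multiplier is `θ'² − t² cos²θ`.
The ODE gives `θ'(z)² + t² cos²θ(z) = D = θ'(0)² + t²` (as `θ(0) = 0`), which turns this into
`−t² + θ'(0)² + 2t² sin²θ`; the bound follows from `0 ≤ sin²θ ≤ 1`.
-/

open Real

noncomputable def eulerDirector (θ φ : ℝ → ℝ) (z : ℝ) : Fin 3 → ℝ :=
  ![cos (θ z) * cos (φ z), cos (θ z) * sin (φ z), sin (θ z)]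

section EulerDirector

variable {θ φ : ℝ → ℝ} {θ' φ' z : ℝ}

theorem hasDerivAt_eulerDirector (hθ : HasDerivAt θ θ' z) (hφ : HasDerivAt φ φ' z) :
    HasDerivAt (eulerDirector θ φ)
      ![-sin (θ z) * θ' * cos (φ z) - cos (θ z) * sin (φ z) * φ',
        -sin (θ z) * θ' * sin (φ z) + cos (θ z) * cos (φ z) * φ',
        cos (θ z) * θ'] z := by
  refine hasDerivAt_pi.2 <| Fin.forall_fin_succ.2
    ⟨?_, Fin.forall_fin_succ.2 ⟨?_, Fin.forall_fin_one.2 ?_⟩⟩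
  · exact (hθ.cos.mul hφ.cos).congr_deriv (by rw [Matrix.cons_val_zero]; ring)
  · exact (hθ.cos.mul hφ.sin).congr_deriv
      (by rw [Fin.succ_zero_eq_one, Matrix.cons_val_one, Matrix.cons_val_zero]; ring)
  · exact hθ.sin

theorem sum_sq_deriv_eulerDirector (hθ : HasDerivAt θ θ' z) (hφ : HasDerivAt φ φ' z) :
    ∑ i, deriv (fun w => eulerDirector θ φ w i) z ^ 2 = θ' ^ 2 + φ' ^ 2 * cos (θ z) ^ 2 := by
  have hd i := (hasDerivAt_pi.1 (hasDerivAt_eulerDirector hθ hφ) i).deriv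
  simp only [Fin.sum_univ_three, hd, Matrix.cons_val_zero, Matrix.cons_val_one,
    Matrix.cons_val_two, Matrix.head_cons, Matrix.tail_cons]
  linear_combination (θ' ^ 2 * sin (θ z) ^ 2 + φ' ^ 2 * cos (θ z) ^ 2) * sin_sq_add_cos_sq (φ z)
    + θ' ^ 2 * sin_sq_add_cos_sq (θ z)

theorem eulerDirector_twist (hθ : HasDerivAt θ θ' z) (hφ : HasDerivAt φ φ' z) :
    eulerDirector θ φ z 1 * deriv (fun w => eulerDirector θ φ w 0) z
      - eulerDirector θ φ z 0 * deriv (fun w => eulerDirector θ φ w 1) z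
      = -φ' * cos (θ z) ^ 2 := by
  have hd i := (hasDerivAt_pi.1 (hasDerivAt_eulerDirector hθ hφ) i).deriv
  rw [hd 0, hd 1]
  simp only [eulerDirector, Matrix.cons_val_zero, Matrix.cons_val_one]
  linear_combination (-φ' * cos (θ z) ^ 2) * sin_sq_add_cos_sq (φ z)

end EulerDirector

theorem cholesteric_lagrange_multiplier_general
    (t D : ℝ)
    (θ : ℝ → ℝ) (hθ : Differentiable ℝ θ)
    (hode : ∀ z ∈ Set.Icc (0:ℝ) 1, (deriv θ z)^2 = D - t^2 * (cos (θ z))^2)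
    (hθ0 : θ 0 = 0)
    (n : ℝ → Fin 3 → ℝ)
    (hn : ∀ z, n z = ![cos (θ z) * cos (t*z), cos (θ z) * sin (t*z), sin (θ z)])
    (lam : ℝ → ℝ)
    (hlam : ∀ z, lam z = (∑ i, (deriv (fun w => n w i) z)^2)
      + 2*t*((n z 1) * deriv (fun w => n w 0) z - (n z 0) * deriv (fun w => n w 1) z)) :
    ∀ z ∈ Set.Icc (0:ℝ) 1,
      lam z = -t^2 + (deriv θ 0)^2 + 2*t^2*(sin (θ z))^2 ∧
      |lam z| ≤ (deriv θ 0)^2 + t^2 := by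
  intro z hz
  obtain rfl : n = eulerDirector θ (t * ·) := funext hn
  have hθz := (hθ z).hasDerivAt
  have hφz := hasDerivAt_const_mul (x := z) t
  have hode0 := hode 0 ⟨le_rfl, zero_le_one⟩
  rw [hθ0, cos_zero] at hode0
  have hlam_eq : lam z = -t^2 + (deriv θ 0)^2 + 2*t^2*(sin (θ z))^2 := by
    rw [hlam z, sum_sq_deriv_eulerDirector hθz hφz, eulerDirector_twist hθz hφz]
    linear_combination hode z hz - hode0 - 2 * t ^ 2 * sin_sq_add_cos_sq (θ z)
  refine ⟨hlam_eq, abs_le.2 ⟨?_, ?_⟩⟩ <;>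
    nlinarith [sin_sq_le_one (θ z), sq_nonneg (sin (θ z)), sq_nonneg (deriv θ 0), sq_nonneg t]

/-- For the one-dimensional cholesteric minimiser
`n*(z) = (cos θ(z) cos(tz), cos θ(z) sin(tz), sin θ(z))` with
`θ'² = D − t² cos²θ`, `θ(0) = 0`, `θ(1) = π/2`, the Lagrange multiplier
`λ(z) = |n*'(z)|² + 2t n*·(∇×n*)` satisfies
`λ = −t² + θ'(0)² + 2t² sin²θ(z)` and `|λ(z)| ≤ θ'(0)² + t²`. -/
theorem cholesteric_lagrange_multiplier
    (t D : ℝ) (hD : t^2 < D)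
    (θ : ℝ → ℝ) (hθ : Differentiable ℝ θ)
    (hode : ∀ z ∈ Set.Icc (0:ℝ) 1, (deriv θ z)^2 = D - t^2 * (cos (θ z))^2)
    (hθ0 : θ 0 = 0) (hθ1 : θ 1 = π/2)
    (n : ℝ → Fin 3 → ℝ)
    (hn : ∀ z, n z = ![cos (θ z) * cos (t*z), cos (θ z) * sin (t*z), sin (θ z)])
    (lam : ℝ → ℝ)
    (hlam : ∀ z, lam z = (∑ i, (deriv (fun w => n w i) z)^2)
      + 2*t*((n z 1) * deriv (fun w => n w 0) z - (n z 0) * deriv (fun w => n w 1) z)) :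
    ∀ z ∈ Set.Icc (0:ℝ) 1,
      lam z = -t^2 + (deriv θ 0)^2 + 2*t^2*(sin (θ z))^2 ∧
      |lam z| ≤ (deriv θ 0)^2 + t^2 :=
  cholesteric_lagrange_multiplier_general t D θ hθ hode hθ0 n hn lam hlam
end
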